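/- arXiv:1407.6973 — 5 statements merged into one kernel-verified Lean document; each statement's English description precedes it below -/
import Mathlib

section
/- Let (p_n)_{n≥0} be polynomials in ℝ[λ] with deg p_n = n (with the convention p_k = 0 for k < 0), and let D_p be a linear operator on ℝ[λ] with D_p(p_n) = n·p_n for all n ≥ 0. Let m ≥ 1 and, for h = 1,…,m, let ε^h be a rational function of one variable (defined at every point where it is evaluated below), and let D_h be the linear operator on ℝ[λ] determined by D_h(p_n) = Σ_{j=1}^n (−1)^{j+1} ε^h(n) ε^h(n−1) ⋯ ε^h(n−j+1) p_{n−j} for n ≥ 0. Define rational functions ξ^h_{x,i} by ξ^h_{x,i} = ∏_{j=0}^{i−1} ε^h(x−j) for i ≥ 1, ξ^h_{x,0} = 1, and ξ^h_{x,i} = 1/ξ^h_{x−i,−i} for i ≤ −1. Let Y_1,…,Y_m be polynomials, and set Ω(x) = det( ξ^l_{x−j,m−j} Y_l(x−j) )_{l,j=1,…,m}; assume Ω(x) ≠ 0 for all integers 0 ≤ x ≤ M. For n ≥ 0 define q_n(λ) as the (m+1)×(m+1) determinant whose first row is (p_n(λ), −p_{n−1}(λ), …, (−1)^m p_{n−m}(λ))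 and whose (h+1)-th row is (ξ^h_{n,m} Y_h(n), ξ^h_{n−1,m−1} Y_h(n−1), …, Y_h(n−m)). Let S be a rational function such that the function S(x)Ω(x) and, for each h = 1,…,m, the function M_h(x) = Σ_{j=1}^m (−1)^{h+j} ξ^h_{x,m−j} S(x+j) det( ξ^l_{x+j−r,m−r} Y_l(x+j−r) )_{l∈{1,…,m}\{h\}, r∈{1,…,m}\{j\}} are polynomials in x, and let P_S be a polynomial satisfying P_S(x) − P_S(x−1) = S(x)Ω(x). Then for every integer 0 ≤ n ≤ M one has the identity in ℝ[λ]: P_S(D_p)(q_n) + Σ_{h=1}^m M_h(D_p)( D_h( Y_h(D_p)(q_n) ) ) = P_S(n) · q_n. -/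
/-!
Expanding `q_n` along its first row gives `q_n = ∑ₖ bₖ(n) p_{n-k}`, where `bₖ(x)` is the maximal
minor, with column `k` deleted, of the `(m+1)×(m+2)` matrix with columns `ξ_{x-i,m+1-i} Y(x-i)`.
The `p_j` are eigenvectors of `D_p` and each `𝒟_h` lowers the index, so the identity splits into
one scalar identity for each coefficient of `p_{n-k}`. Inserting the definition of `M_h` turns it
into sums of bordered Casorati determinants: `Ω(n-k+j+1)` with its column `j` replaced by a
column of the same type. As functionals of the new column these factor through the columns of
the `(m+1)×(m+2)` matrix, whose kernel contains the signed minors `(-1)ⁱ bᵢ`; the sums collapse to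
`S Ω (n-k+j+1) b_k` for `j < k` and vanish otherwise, and `∑_{j<k} S Ω (n-k+j+1)` telescopes to
`P_S(n) - P_S(n-k)`.
-/

open Polynomial Finset

noncomputable section

/-- `ξ_{x,i} = ∏_{j=0}^{i−1} ε(x−j)` (for `i ≥ 0`). -/
def xi (ε : ℝ → ℝ) (x : ℝ) (i : ℕ) : ℝ := ∏ j ∈ Finset.range i, ε (x - j)

/-- The quasi-Casorati polynomial `q_n` of Theorem 3.2: an `(m+2)×(m+2)` determinant whose
first row consists of the polynomials `(−1)^j p_{n−j}` (zero for `n−j<0`) and whose further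
rows are the constants `ξ^h_{n−j,m+1−j} Y_h(n−j)`.  Here the number of `𝒟`-operators is
`m+1`. -/
def qdet (m : ℕ) (p : ℕ → Polynomial ℝ) (ε : Fin (m + 1) → ℝ → ℝ)
    (Y : Fin (m + 1) → Polynomial ℝ) (n : ℕ) : Polynomial ℝ :=
  Matrix.det (Matrix.of fun i j : Fin (m + 2) =>
    if h0 : (i : ℕ) = 0 then
      Polynomial.C ((-1 : ℝ) ^ (j : ℕ)) * (if (j : ℕ) ≤ n then p (n - (j : ℕ)) else 0)
    else
      Polynomial.C
        (xi (ε ⟨(i : ℕ) - 1, by have := i.isLt; omega⟩) ((n : ℝ) - (j : ℕ)) (m + 1 - (j : ℕ)) *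
          (Y ⟨(i : ℕ) - 1, by have := i.isLt; omega⟩).eval ((n : ℝ) - (j : ℕ))))

/-- The Casorati determinant `Ω(x) = det( ξ^l_{x−j,m−j} Y_l(x−j) )_{l,j=1..m}` (with `m+1`
operators). -/
def casdet (m : ℕ) (ε : Fin (m + 1) → ℝ → ℝ) (Y : Fin (m + 1) → Polynomial ℝ) (x : ℝ) : ℝ :=
  Matrix.det (Matrix.of fun l j : Fin (m + 1) =>
    xi (ε l) (x - ((j : ℕ) + 1)) (m + 1 - ((j : ℕ) + 1)) * (Y l).eval (x - ((j : ℕ) + 1)))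

namespace Matrix

variable {R : Type*} [CommRing R] {n : ℕ}

theorem det_updateCol_eq_sum (A : Matrix (Fin (n + 1)) (Fin (n + 1)) R) (j : Fin (n + 1))
    (u : Fin (n + 1) → R) :
    (A.updateCol j u).det = ∑ i : Fin (n + 1),
      (-1) ^ ((i : ℕ) + j) * u i * (A.submatrix i.succAbove j.succAbove).det := by
  simp [det_succ_column _ j]

theorem mulVec_alternating_minors_eq_zero (B : Matrix (Fin (n + 1)) (Fin (n + 2)) R) :
    B *ᵥ (fun i => (-1) ^ (i : ℕ) * (B.submatrix id i.succAbove).det) = 0 := by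
  ext l
  let A : Matrix (Fin (n + 2)) (Fin (n + 2)) R := of (Fin.cons (B l) B)
  have hrep : A.det = 0 := det_zero_of_row_eq (Fin.succ_ne_zero l).symm rfl
  rw [det_succ_row_zero] at hrep
  rw [Pi.zero_apply, ← hrep, mulVec, dotProduct]
  refine sum_congr rfl fun i _ => ?_
  change B l i * _ = _ * B l i * (B.submatrix id i.succAbove).det
  ring

end Matrix

lemma xi_add (ε : ℝ → ℝ) (x : ℝ) (a b : ℕ) : xi ε x (a + b) = xi ε x a * xi ε (x - a) b := by
  simp only [xi, prod_range_add, Nat.cast_add, sub_sub]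

lemma sum_range_eq_sub_of_sub_one {f g : ℝ → ℝ} (hfg : ∀ x, f x - f (x - 1) = g x) (x : ℝ) (k : ℕ) :
    ∑ j ∈ range k, g (x - k + (j + 1)) = f x - f (x - k) := by
  have := sum_range_sub (fun j : ℕ => f (x - k + j)) k
  simp only [Nat.cast_add, Nat.cast_one, sub_add_cancel, Nat.cast_zero, add_zero] at this
  rw [← this]
  exact sum_congr rfl fun j _ => by rw [← hfg]; congr 2; ring

section LoweringOperators

variable {R M : Type*} [CommRing R] [AddCommGroup M] [Module R M] (p : ℕ → M)

lemma aeval_sum_smul_of_apply_eq_smul (Dp : Module.End R M)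
    (hDp : ∀ n : ℕ, Dp (p n) = (n : R) • p n) (Q : R[X]) (n : ℕ) (c : ℕ → R) :
    aeval Dp Q (∑ k ∈ range (n + 1), c k • p (n - k)) =
      ∑ k ∈ range (n + 1), (c k * Q.eval ((n : R) - k)) • p (n - k) := by
  simp only [map_sum, map_smul]
  refine sum_congr rfl fun k hk => ?_
  rw [Module.End.aeval_apply_of_mem_apply_eq_smul (hDp _),
    Nat.cast_sub (Nat.lt_succ_iff.mp (mem_range.mp hk)), smul_smul]

lemma apply_sum_smul_of_lowering (D : Module.End R M) (e : ℕ → ℕ → R)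
    (hD : ∀ n : ℕ, D (p n) = ∑ j ∈ Icc 1 n, e n j • p (n - j)) (n : ℕ) (c : ℕ → R) :
    D (∑ k ∈ range (n + 1), c k • p (n - k)) =
      ∑ K ∈ range (n + 1), (∑ i ∈ range K, c i * e (n - i) (K - i)) • p (n - K) := by
  calc D (∑ k ∈ range (n + 1), c k • p (n - k))
      = ∑ k ∈ range (n + 1), ∑ K ∈ Icc (k + 1) n, (c k * e (n - k) (K - k)) • p (n - K) := by
        simp only [map_sum, map_smul, hD, smul_sum, smul_smul]
        refine sum_congr rfl fun k hk => ?_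
        rw [mem_range] at hk
        refine sum_nbij' (· + k) (· - k) ?_ ?_ ?_ ?_ ?_ <;> intro j hj <;>
          simp only [mem_Icc] at hj ⊢ <;> try omega
        rw [Nat.add_sub_cancel, Nat.sub_sub, add_comm k]
    _ = ∑ K ∈ range (n + 1), ∑ i ∈ range K, (c i * e (n - i) (K - i)) • p (n - K) :=
        sum_comm' fun k K => by simp only [mem_range, mem_Icc]; omega
    _ = _ := by simp only [sum_smul]

end LoweringOperators

section Casorati

variable {m : ℕ} (ε : Fin (m + 1) → ℝ → ℝ) (Y : Fin (m + 1) → ℝ[X])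

def casoratiColumn (t : ℝ) (d : ℕ) (l : Fin (m + 1)) : ℝ := xi (ε l) t d * (Y l).eval t

def casoratiMatrix (x : ℝ) : Matrix (Fin (m + 1)) (Fin (m + 1)) ℝ :=
  Matrix.of fun l j => casoratiColumn ε Y (x - ((j : ℕ) + 1)) (m + 1 - ((j : ℕ) + 1)) l

def qcoeffMatrix (x : ℝ) : Matrix (Fin (m + 1)) (Fin (m + 2)) ℝ :=
  Matrix.of fun l i => casoratiColumn ε Y (x - (i : ℕ)) (m + 1 - i) l

/-- The minor `bₖ(x)` of the header, extended by `0` past the last column `k = m + 1`. -/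
def qcoeff (x : ℝ) (k : ℕ) : ℝ :=
  if hk : k < m + 2 then ((qcoeffMatrix ε Y x).submatrix id (Fin.succAbove ⟨k, hk⟩)).det else 0

lemma qcoeff_of_le {x : ℝ} {k : ℕ} (hk : m + 2 ≤ k) : qcoeff ε Y x k = 0 :=
  dif_neg hk.not_gt

lemma qcoeff_coe (x : ℝ) (i : Fin (m + 2)) :
    qcoeff ε Y x i = ((qcoeffMatrix ε Y x).submatrix id i.succAbove).det :=
  dif_pos i.isLt

lemma qdet_eq_sum (p : ℕ → ℝ[X]) (n : ℕ) :
    qdet m p ε Y n = ∑ k ∈ range (n + 1), qcoeff ε Y n k • p (n - k) := by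
  have hrow : qdet m p ε Y n =
      ∑ i : Fin (m + 2), qcoeff ε Y n i • if (i : ℕ) ≤ n then p (n - i) else 0 := by
    rw [qdet, Matrix.det_succ_row_zero]
    refine sum_congr rfl fun i _ => ?_
    rw [qcoeff_coe, smul_eq_C_mul, RingHom.map_det, mul_comm (Matrix.det _)]
    congr 1
    simp only [Matrix.of_apply, Fin.val_zero, ↓reduceDIte]
    rw [map_pow, map_neg, map_one, ← mul_assoc, ← mul_pow, neg_one_mul, neg_neg, one_pow, one_mul]
  have hvanish : ∀ k, n + 1 ≤ k ∨ m + 2 ≤ k →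
      (qcoeff ε Y n k • if k ≤ n then p (n - k) else 0) = 0 := by
    rintro k (hk | hk)
    · rw [if_neg (by omega), smul_zero]
    · rw [qcoeff_of_le ε Y hk, zero_smul]
  rw [hrow, Fin.sum_univ_eq_sum_range (fun k => qcoeff ε Y n k • if k ≤ n then p (n - k) else 0)]
  calc _ = ∑ k ∈ range (m + 2) ∩ range (n + 1), qcoeff ε Y n k • if k ≤ n then p (n - k) else 0 :=
        (sum_subset inter_subset_left fun k hk hk' =>
          hvanish k (by simp only [mem_inter, mem_range] at hk hk'; omega)).symm
    _ = ∑ k ∈ range (n + 1), qcoeff ε Y n k • if k ≤ n then p (n - k) else 0 :=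
        sum_subset inter_subset_right fun k hk hk' =>
          hvanish k (by simp only [mem_inter, mem_range] at hk hk'; omega)
    _ = _ := sum_congr rfl fun k hk => by rw [if_pos (Nat.lt_succ_iff.mp (mem_range.mp hk))]

lemma sum_range_qcoeff_mul_eq_zero (x : ℝ) (a : Fin (m + 1) → ℝ) {N : ℕ} (hN : m + 2 ≤ N) :
    ∑ i ∈ range N, (-1) ^ i * qcoeff ε Y x i * ∑ l, a l * casoratiColumn ε Y (x - i) (m + 1 - i) l
      = 0 := by
  have hker := congrArg (a ⬝ᵥ ·) (Matrix.mulVec_alternating_minors_eq_zero (qcoeffMatrix ε Y x))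
  simp only [Matrix.dotProduct_mulVec, dotProduct_zero] at hker
  rw [← sum_subset (range_subset_range.2 hN) fun i _ hi => by
    rw [qcoeff_of_le ε Y (not_lt.1 (mem_range.not.1 hi)), mul_zero, zero_mul], ← hker,
    ← Fin.sum_univ_eq_sum_range]
  refine sum_congr rfl fun i _ => ?_
  rw [qcoeff_coe]
  simp only [Matrix.vecMul, dotProduct, qcoeffMatrix, Matrix.of_apply]
  ring

lemma det_updateCol_casoratiColumn (x : ℝ) (j r : Fin (m + 1)) {t : ℝ} {d : ℕ}
    (ht : t = x - ((r : ℕ) + 1)) (hd : d = m - r) :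
    ((casoratiMatrix ε Y x).updateCol j (casoratiColumn ε Y t d)).det =
      if r = j then casdet m ε Y x else 0 := by
  have hcol : casoratiColumn ε Y t d = fun l => casoratiMatrix ε Y x l r := by
    subst ht hd
    ext l
    simp only [casoratiMatrix, Matrix.of_apply, Nat.add_sub_add_right]
  rw [hcol]
  split_ifs with hrj
  · subst hrj
    rw [Matrix.updateCol_eq_self]
    rfl
  · exact Matrix.det_updateCol_eq_zero hrj

lemma qcoeff_mul_congr {x : ℝ} {i : ℕ} {u v : ℝ} (h : i ≤ m + 1 → u = v) :
    qcoeff ε Y x i * u = qcoeff ε Y x i * v := by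
  rcases le_or_gt i (m + 1) with hi | hi
  · rw [h hi]
  · rw [qcoeff_of_le ε Y hi, zero_mul, zero_mul]

lemma sum_range_qcoeff_mul_det_updateCol_eq_zero (x x₀ : ℝ) (j : Fin (m + 1)) (s : ℕ) {N : ℕ}
    (hN : m + 2 ≤ N) :
    ∑ i ∈ range N, (-1) ^ i * (qcoeff ε Y x i *
      ((casoratiMatrix ε Y x₀).updateCol j (casoratiColumn ε Y (x - i) (m + 1 - i + s))).det) =
      0 := by
  -- `ξ_{x-i, m+1-i+s} = ξ_{x-i, m+1-i} ξ_{x-m-1, s}`: the bordered determinant is a linear form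
  -- in the `i`-th column of `qcoeffMatrix ε Y x`.
  let a : Fin (m + 1) → ℝ := fun l => (-1) ^ ((l : ℕ) + j) *
    ((casoratiMatrix ε Y x₀).submatrix l.succAbove j.succAbove).det * xi (ε l) (x - (m + 1)) s
  rw [← sum_range_qcoeff_mul_eq_zero ε Y x a hN]
  refine sum_congr rfl fun i _ => ?_
  rw [mul_assoc, qcoeff_mul_congr ε Y fun hi => ?_]
  simp only [a, Matrix.det_updateCol_eq_sum, casoratiColumn, xi_add]
  refine sum_congr rfl fun l _ => ?_
  rw [show x - i - ((m + 1 - i : ℕ) : ℝ) = x - (m + 1) by push_cast [Nat.cast_sub hi]; ring]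
  ring

lemma sum_qcoeff_mul_det_updateCol_of_le (x : ℝ) {k : ℕ} {j : Fin (m + 1)} (hjk : k ≤ j) :
    ∑ c ∈ range k, (-1) ^ (k - c + 1) * qcoeff ε Y x c *
        ((casoratiMatrix ε Y (x - k + ((j : ℕ) + 1))).updateCol j
          (casoratiColumn ε Y (x - c) (k - c + (m - j)))).det = 0 := by
  refine sum_eq_zero fun c hc => ?_
  rw [mem_range] at hc
  rw [det_updateCol_casoratiColumn ε Y _ j ⟨j - (k - c), by omega⟩ ?_ (by simp only; omega),
    if_neg (Fin.ne_of_val_ne (by simp only; omega)), mul_zero]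
  simp only
  rw [Nat.cast_sub (by omega), Nat.cast_sub hc.le]
  ring

lemma sum_qcoeff_mul_det_updateCol_of_lt (x : ℝ) {k : ℕ} {j : Fin (m + 1)} (hjk : (j : ℕ) < k) :
    ∑ c ∈ range k, (-1) ^ (k - c + 1) * qcoeff ε Y x c *
        ((casoratiMatrix ε Y (x - k + ((j : ℕ) + 1))).updateCol j
          (casoratiColumn ε Y (x - c) (k - c + (m - j)))).det =
      casdet m ε Y (x - k + ((j : ℕ) + 1)) * qcoeff ε Y x k := by
  -- In the vanishing sum `hker`, the terms `i < k` are the summands on the left, the term `i = k`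
  -- is the Casorati matrix itself and for `k < i ≤ m + 1` the new column repeats column `j+i-k`.
  set C := casoratiMatrix ε Y (x - k + ((j : ℕ) + 1))
  let G : ℕ → ℝ := fun i =>
    (C.updateCol j (casoratiColumn ε Y (x - i) (m + 1 - i + (k - 1 - j)))).det
  have hker : ∑ i ∈ range (k + 1 + (m + 1)), (-1) ^ i * (qcoeff ε Y x i * G i) = 0 :=
    sum_range_qcoeff_mul_det_updateCol_eq_zero ε Y x _ j (k - 1 - j) (by omega)
  have hbefore : ∀ c < k, qcoeff ε Y x c * G c = qcoeff ε Y x c *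
      (C.updateCol j (casoratiColumn ε Y (x - c) (k - c + (m - j)))).det := fun c hc =>
    qcoeff_mul_congr ε Y fun _ => by simp only [G]; congr 3; omega
  have hat : qcoeff ε Y x k * G k = qcoeff ε Y x k * casdet m ε Y (x - k + ((j : ℕ) + 1)) :=
    qcoeff_mul_congr ε Y fun hk => by
      simp only [G]
      rw [det_updateCol_casoratiColumn ε Y _ j j (by ring) (by omega), if_pos rfl]
  have hafter : ∀ i, qcoeff ε Y x (k + 1 + i) * G (k + 1 + i) = 0 := fun i => by
    rw [← mul_zero (qcoeff ε Y x _)]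
    refine qcoeff_mul_congr ε Y fun hi => ?_
    simp only [G]
    rw [det_updateCol_casoratiColumn ε Y _ j ⟨j + 1 + i, by omega⟩ ?_ (by simp only; omega),
      if_neg (Fin.ne_of_val_ne (by simp only; omega))]
    simp only
    push_cast
    ring
  have hsign : ∀ c ≤ k, (-1 : ℝ) ^ (k - c + 1) = (-1) ^ (k + 1) * (-1) ^ c := fun c hc => by
    rw [← pow_add, show k + 1 + c = k - c + 1 + 2 * c by omega, pow_add _ (k - c + 1), pow_mul,
      neg_one_sq, one_pow, mul_one]
  rw [sum_range_add, sum_range_succ] at hker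
  simp only [hafter, mul_zero, sum_const_zero, add_zero, hat] at hker
  calc _ = (-1) ^ (k + 1) * ∑ c ∈ range k, (-1) ^ c * (qcoeff ε Y x c * G c) := by
        rw [mul_sum]
        refine sum_congr rfl fun c hc => ?_
        rw [hbefore c (mem_range.mp hc), hsign c (mem_range.mp hc).le]
        ring
    _ = casdet m ε Y (x - k + ((j : ℕ) + 1)) * qcoeff ε Y x k := by
        rw [eq_neg_of_add_eq_zero_left hker, pow_succ]
        rcases neg_one_pow_eq_or ℝ k with h | h <;> rw [h] <;> ring

variable (S : ℝ → ℝ)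

/-- The function `M_h` of the statement. -/
def casoratiMultiplier (h : Fin (m + 1)) (x : ℝ) : ℝ :=
  ∑ j : Fin (m + 1), (-1) ^ ((h : ℕ) + (j : ℕ)) * xi (ε h) x (m + 1 - ((j : ℕ) + 1)) *
    S (x + ((j : ℕ) + 1)) *
    ((casoratiMatrix ε Y (x + ((j : ℕ) + 1))).submatrix h.succAbove j.succAbove).det

lemma sum_casoratiMultiplier_mul_casoratiColumn {x t : ℝ} {d : ℕ} (htd : t - d = x) :
    ∑ h, casoratiMultiplier ε Y S h x * casoratiColumn ε Y t d h =
      ∑ j : Fin (m + 1), S (x + ((j : ℕ) + 1)) *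
        ((casoratiMatrix ε Y (x + ((j : ℕ) + 1))).updateCol j
          (casoratiColumn ε Y t (d + (m - j)))).det := by
  simp only [casoratiMultiplier, Matrix.det_updateCol_eq_sum, casoratiColumn, xi_add, htd,
    sum_mul, mul_sum]
  rw [sum_comm]
  refine sum_congr rfl fun j _ => sum_congr rfl fun h _ => ?_
  rw [Nat.add_sub_add_right]
  ring

lemma sum_sum_mul_casoratiMultiplier (x : ℝ) (k : ℕ) :
    ∑ h, (∑ c ∈ range k, (-1) ^ (k - c + 1) * (qcoeff ε Y x c * (Y h).eval (x - c)) *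
        xi (ε h) (x - c) (k - c)) * casoratiMultiplier ε Y S h (x - k) =
      ∑ j : Fin (m + 1), if (j : ℕ) < k then
        S (x - k + ((j : ℕ) + 1)) * casdet m ε Y (x - k + ((j : ℕ) + 1)) * qcoeff ε Y x k
        else 0 := by
  calc _ = ∑ c ∈ range k, (-1) ^ (k - c + 1) * qcoeff ε Y x c *
        ∑ h, casoratiMultiplier ε Y S h (x - k) * casoratiColumn ε Y (x - c) (k - c) h := by
        simp only [sum_mul, mul_sum, casoratiColumn]
        rw [sum_comm]
        exact sum_congr rfl fun c _ => sum_congr rfl fun h _ => by ring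
    _ = ∑ c ∈ range k, (-1) ^ (k - c + 1) * qcoeff ε Y x c *
        ∑ j : Fin (m + 1), S (x - k + ((j : ℕ) + 1)) *
          ((casoratiMatrix ε Y (x - k + ((j : ℕ) + 1))).updateCol j
            (casoratiColumn ε Y (x - c) (k - c + (m - j)))).det :=
        sum_congr rfl fun c hc => by
          rw [sum_casoratiMultiplier_mul_casoratiColumn ε Y S (by
            rw [Nat.cast_sub (mem_range.1 hc).le]; ring)]
    _ = ∑ j : Fin (m + 1), S (x - k + ((j : ℕ) + 1)) * ∑ c ∈ range k,
        (-1) ^ (k - c + 1) * qcoeff ε Y x c *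
        ((casoratiMatrix ε Y (x - k + ((j : ℕ) + 1))).updateCol j
          (casoratiColumn ε Y (x - c) (k - c + (m - j)))).det := by
        simp only [mul_sum]
        rw [sum_comm]
        exact sum_congr rfl fun j _ => sum_congr rfl fun c _ => by ring
    _ = _ := by
        refine sum_congr rfl fun j _ => ?_
        split_ifs with hjk
        · rw [sum_qcoeff_mul_det_updateCol_of_lt ε Y x hjk, mul_assoc]
        · rw [sum_qcoeff_mul_det_updateCol_of_le ε Y x (not_lt.1 hjk), mul_zero]

lemma qcoeff_mul_eval_add_sum_eq (PM : Fin (m + 1) → ℝ[X]) (PSO PS : ℝ[X])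
    (hPSO : ∀ x : ℝ, S x * casdet m ε Y x = PSO.eval x)
    (hPM : ∀ h x, casoratiMultiplier ε Y S h x = (PM h).eval x)
    (hPS : ∀ x : ℝ, PS.eval x - PS.eval (x - 1) = PSO.eval x) (x : ℝ) (k : ℕ) :
    qcoeff ε Y x k * PS.eval (x - k) +
        ∑ h, (∑ c ∈ range k, (-1) ^ (k - c + 1) * (qcoeff ε Y x c * (Y h).eval (x - c)) *
          xi (ε h) (x - c) (k - c)) * (PM h).eval (x - k) =
      PS.eval x * qcoeff ε Y x k := by
  simp only [← hPM, sum_sum_mul_casoratiMultiplier, hPSO]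
  rcases le_or_gt k (m + 1) with hk | hk
  · rw [Fin.sum_univ_eq_sum_range (fun j => if j < k then
      PSO.eval (x - k + (j + 1)) * qcoeff ε Y x k else 0),
      ← sum_subset (range_subset_range.2 hk) fun j _ hj => if_neg (mem_range.not.1 hj),
      sum_congr rfl fun j hj => if_pos (mem_range.1 hj), ← sum_mul,
      sum_range_eq_sub_of_sub_one hPS]
    ring
  · simp [qcoeff_of_le ε Y hk]

end Casorati

theorem casorati_eigenfunctions_general (m M : ℕ)
    (p : ℕ → Polynomial ℝ)
    (Dp : Module.End ℝ (Polynomial ℝ)) (hDp : ∀ n : ℕ, Dp (p n) = (n : ℝ) • p n)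
    (ε : Fin (m + 1) → ℝ → ℝ)
    (Dop : Fin (m + 1) → Module.End ℝ (Polynomial ℝ))
    (hDop : ∀ h : Fin (m + 1), ∀ n : ℕ, Dop h (p n) =
      ∑ j ∈ Finset.Icc 1 n, ((-1 : ℝ) ^ (j + 1) * xi (ε h) (n : ℝ) j) • p (n - j))
    (Y : Fin (m + 1) → Polynomial ℝ)
    (S : ℝ → ℝ)
    (PSO : Polynomial ℝ)
    (hPSO : ∀ x : ℝ, S x * casdet m ε Y x = PSO.eval x)
    (PM : Fin (m + 1) → Polynomial ℝ)
    (hPM : ∀ h : Fin (m + 1), ∀ x : ℝ,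
      (∑ j : Fin (m + 1), (-1 : ℝ) ^ ((h : ℕ) + (j : ℕ)) *
          xi (ε h) x (m + 1 - ((j : ℕ) + 1)) * S (x + ((j : ℕ) + 1)) *
          Matrix.det (Matrix.of fun l r : Fin m =>
            xi (ε (h.succAbove l)) (x + ((j : ℕ) + 1) - (((j.succAbove r : Fin (m + 1)) : ℕ) + 1))
                (m + 1 - (((j.succAbove r : Fin (m + 1)) : ℕ) + 1)) *
              (Y (h.succAbove l)).eval
                (x + ((j : ℕ) + 1) - (((j.succAbove r : Fin (m + 1)) : ℕ) + 1)))) =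
        (PM h).eval x)
    (PS : Polynomial ℝ)
    (hPS : ∀ x : ℝ, PS.eval x - PS.eval (x - 1) = PSO.eval x) :
    ∀ n : ℕ, n ≤ M →
      (Polynomial.aeval Dp PS) (qdet m p ε Y n) +
          ∑ h : Fin (m + 1),
            (Polynomial.aeval Dp (PM h)) ((Dop h) ((Polynomial.aeval Dp (Y h)) (qdet m p ε Y n))) =
        PS.eval (n : ℝ) • qdet m p ε Y n := by
  intro n _
  have hlower : ∀ h (c : ℕ → ℝ), Dop h (∑ k ∈ range (n + 1), c k • p (n - k)) =
      ∑ K ∈ range (n + 1), (∑ i ∈ range K, (-1) ^ (K - i + 1) * c i * xi (ε h) (n - i) (K - i)) •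
        p (n - K) := fun h c => by
    rw [apply_sum_smul_of_lowering p (Dop h) _ (hDop h)]
    refine sum_congr rfl fun K hK => congrArg (· • p (n - K)) (sum_congr rfl fun i hi => ?_)
    rw [Nat.cast_sub (by simp only [mem_range] at hK hi; omega)]
    ring
  simp only [qdet_eq_sum, aeval_sum_smul_of_apply_eq_smul p Dp hDp, hlower, smul_sum, smul_smul]
  rw [sum_comm, ← sum_add_distrib]
  refine sum_congr rfl fun K _ => ?_
  rw [← sum_smul, ← add_smul, qcoeff_mul_eval_add_sum_eq ε Y S PM PSO PS hPSO hPM hPS]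

/-- Theorem 3.2 (`𝒟`-operators produce eigenfunctions): with `m+1` `𝒟`-operators `Dop h`
for the polynomials `(p_n)` (eigenfunctions of `Dp` with eigenvalue `n`), arbitrary
polynomials `Y_h`, and a rational function `S` making `S·Ω` and every `M_h` polynomial,
the Casorati polynomials `q_n` satisfy
`P_S(D_p)(q_n) + Σ_h M_h(D_p) 𝒟_h Y_h(D_p) (q_n) = P_S(n) q_n` for `0 ≤ n ≤ M`. -/
theorem casorati_eigenfunctions (m M : ℕ)
    (p : ℕ → Polynomial ℝ) (hpdeg : ∀ n : ℕ, (p n).degree = (n : ℕ))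
    (Dp : Module.End ℝ (Polynomial ℝ)) (hDp : ∀ n : ℕ, Dp (p n) = (n : ℝ) • p n)
    (ε : Fin (m + 1) → ℝ → ℝ)
    (Dop : Fin (m + 1) → Module.End ℝ (Polynomial ℝ))
    (hDop : ∀ h : Fin (m + 1), ∀ n : ℕ, Dop h (p n) =
      ∑ j ∈ Finset.Icc 1 n, ((-1 : ℝ) ^ (j + 1) * xi (ε h) (n : ℝ) j) • p (n - j))
    (Y : Fin (m + 1) → Polynomial ℝ)
    (S : ℝ → ℝ)
    (hΩ : ∀ x : ℕ, x ≤ M → casdet m ε Y x ≠ 0)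
    (PSO : Polynomial ℝ)
    (hPSO : ∀ x : ℝ, S x * casdet m ε Y x = PSO.eval x)
    (PM : Fin (m + 1) → Polynomial ℝ)
    (hPM : ∀ h : Fin (m + 1), ∀ x : ℝ,
      (∑ j : Fin (m + 1), (-1 : ℝ) ^ ((h : ℕ) + (j : ℕ)) *
          xi (ε h) x (m + 1 - ((j : ℕ) + 1)) * S (x + ((j : ℕ) + 1)) *
          Matrix.det (Matrix.of fun l r : Fin m =>
            xi (ε (h.succAbove l)) (x + ((j : ℕ) + 1) - (((j.succAbove r : Fin (m + 1)) : ℕ) + 1))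
                (m + 1 - (((j.succAbove r : Fin (m + 1)) : ℕ) + 1)) *
              (Y (h.succAbove l)).eval
                (x + ((j : ℕ) + 1) - (((j.succAbove r : Fin (m + 1)) : ℕ) + 1)))) =
        (PM h).eval x)
    (PS : Polynomial ℝ)
    (hPS : ∀ x : ℝ, PS.eval x - PS.eval (x - 1) = PSO.eval x) :
    ∀ n : ℕ, n ≤ M →
      (Polynomial.aeval Dp PS) (qdet m p ε Y n) +
          ∑ h : Fin (m + 1),
            (Polynomial.aeval Dp (PM h)) ((Dop h) ((Polynomial.aeval Dp (Y h)) (qdet m p ε Y n))) =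
        PS.eval (n : ℝ) • qdet m p ε Y n :=
  casorati_eigenfunctions_general m M p Dp hDp ε Dop hDop Y S PSO hPSO PM hPM PS hPS

end
end

section
/- Let m ≥ 1 and let Ψ_1, …, Ψ_m be real polynomials in one variable, not all zero, and set d̃ = max_j deg Ψ_j. Define M(x) = Σ_{j=1}^m (−1)^j Ψ_j(x+j) and, for each integer g ≥ 0, G_g(x) = Σ_{j=1}^m (−1)^j (x−j+1)^g Ψ_j(x); these are polynomials. Let d_0 = deg G_0 and assume that deg G_g ≤ g + d_0 for every integer g with 0 ≤ g ≤ d̃ − d_0. Then M is a polynomial of degree at most d_0. -/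
/-!
Taylor's formula `p(X + c) = ∑_g c ^ g • D^(g) p` in Hasse derivatives writes
`M = ∑_j (-1) ^ j Ψ_j(X + j)` as `∑_g D^(g) R_g` with `R_g = ∑_j (-1) ^ j j ^ g Ψ_j`, and `D^(g)`
lowers degrees by `g`, so it suffices that `deg R_g ≤ g + d₀`. For `g + d₀ > d̃` this holds because
`deg R_g ≤ d̃`. Otherwise expand `j ^ g = ((X + 1) - (X - j + 1)) ^ g` binomially: `R_g` becomes a
combination of the `(X + 1) ^ i G_{g-i}`, each of degree at most `i + (g - i) + d₀`.
-/

open Polynomial Finset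

namespace Polynomial

variable {R ι : Type*}

theorem comp_X_add_C_eq_sum_smul_hasseDeriv [CommSemiring R] (p : R[X]) (c : R) {N : ℕ}
    (hN : p.natDegree ≤ N) :
    p.comp (X + C c) = ∑ g ∈ range (N + 1), c ^ g • hasseDeriv g p := by
  ext n
  have hn : (hasseDeriv n p).natDegree < N + 1 := (natDegree_hasseDeriv_le p n).trans_lt (by omega)
  rw [← taylor_apply, taylor_coeff, finsetSum_coeff, eval_eq_sum_range' hn]
  refine sum_congr rfl fun g _ => ?_
  rw [coeff_smul, hasseDeriv_coeff, hasseDeriv_coeff, smul_eq_mul, Nat.add_comm n g,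
    Nat.choose_symm_add]
  ring

theorem degree_hasseDeriv_le_of_degree_le [Semiring R] {p : R[X]} {g : ℕ} {E : WithBot ℕ}
    (hp : p.degree ≤ g + E) : (hasseDeriv g p).degree ≤ E := by
  cases E with
  | bot => simp [degree_eq_bot.mp (le_bot_iff.mp (by simpa using hp))]
  | coe d =>
    have hpd : p.natDegree ≤ g + d := natDegree_le_of_degree_le (by exact_mod_cast hp)
    exact degree_le_of_natDegree_le ((natDegree_hasseDeriv_le p g).trans (by omega))

theorem degree_sum_pow_sub_mul_le [CommRing R] (s : Finset ι) {a : R[X]} (ha : a.degree ≤ 1)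
    (b p : ι → R[X]) {g : ℕ} {D : WithBot ℕ}
    (h : ∀ i ≤ g, (∑ j ∈ s, b j ^ i * p j).degree ≤ i + D) :
    (∑ j ∈ s, (a - b j) ^ g * p j).degree ≤ g + D := by
  have expand : ∑ j ∈ s, (a - b j) ^ g * p j = ∑ i ∈ range (g + 1),
      ((-1) ^ (i + g) * (g.choose i : R)) • (a ^ i * ∑ j ∈ s, b j ^ (g - i) * p j) := by
    simp only [mul_sum, smul_sum]
    rw [sum_comm]
    refine sum_congr rfl fun j _ => ?_
    rw [sub_pow, sum_mul]
    refine sum_congr rfl fun i _ => ?_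
    rw [smul_eq_C_mul, map_mul, map_pow, map_neg, map_one, map_natCast]
    ring
  rw [expand]
  refine (degree_sum_le _ _).trans (Finset.sup_le fun i hi => (degree_smul_le _ _).trans ?_)
  have hig : i ≤ g := Nat.lt_succ_iff.mp (mem_range.mp hi)
  calc (a ^ i * ∑ j ∈ s, b j ^ (g - i) * p j).degree
      ≤ i + ((g - i : ℕ) + D) := (degree_mul_le _ _).trans <|
        add_le_add (by simpa using degree_pow_le_of_le i ha) (h _ (Nat.sub_le g i))
    _ = g + D := by rw [← add_assoc, ← Nat.cast_add, Nat.add_sub_cancel' hig]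

theorem degree_sum_comp_X_add_C_le [CommRing R] (s : Finset ι) (p : ι → R[X]) (c : ι → R)
    {N : ℕ} (hp : ∀ j ∈ s, (p j).natDegree ≤ N) {D : WithBot ℕ}
    (hG : ∀ g : ℕ, g + D ≤ N → (∑ j ∈ s, (X - C (c j) + 1) ^ g * p j).degree ≤ g + D) :
    (∑ j ∈ s, (p j).comp (X + C (c j))).degree ≤ D := by
  set r : ℕ → R[X] := fun g => ∑ j ∈ s, c j ^ g • p j
  have taylor : ∑ j ∈ s, (p j).comp (X + C (c j)) = ∑ g ∈ range (N + 1), hasseDeriv g (r g) := by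
    simp only [r, map_sum, map_smul]
    rw [sum_comm]
    exact sum_congr rfl fun j hj => comp_X_add_C_eq_sum_smul_hasseDeriv _ _ (hp j hj)
  have hr : ∀ g : ℕ, (r g).degree ≤ g + D := by
    intro g
    by_cases hg : g + D ≤ N
    · have hrg : r g = ∑ j ∈ s, ((X + 1) - (X - C (c j) + 1)) ^ g * p j := by
        refine sum_congr rfl fun j _ => ?_
        rw [smul_eq_C_mul, C_pow]
        ring
      rw [hrg]
      refine degree_sum_pow_sub_mul_le s (by compute_degree) _ p fun i hi => hG i ?_
      exact le_trans (by gcongr) hg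
    · refine le_trans ?_ (not_le.mp hg).le
      exact (degree_sum_le _ _).trans <| Finset.sup_le fun j hj =>
        (degree_smul_le _ _).trans (degree_le_of_natDegree_le (hp j hj))
  rw [taylor]
  exact (degree_sum_le _ _).trans (Finset.sup_le fun g _ => degree_hasseDeriv_le_of_degree_le (hr g))

end Polynomial

theorem degree_M_le_general (m : ℕ) (Ψ : Fin m → Polynomial ℝ)
    (dtil : ℕ) (hdtil : dtil = Finset.univ.sup fun j => (Ψ j).natDegree)
    (hG : ∀ g : ℕ,
      ((g : WithBot ℕ) +
          (∑ j : Fin m, (-1 : ℝ) ^ ((j : ℕ) + 1) • Ψ j).degree ≤ (dtil : WithBot ℕ)) →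
      (∑ j : Fin m,
          (-1 : ℝ) ^ ((j : ℕ) + 1) • ((Polynomial.X - Polynomial.C ((j : ℝ) + 1) + 1) ^ g * Ψ j)).degree ≤
        (g : WithBot ℕ) + (∑ j : Fin m, (-1 : ℝ) ^ ((j : ℕ) + 1) • Ψ j).degree) :
    (∑ j : Fin m, (-1 : ℝ) ^ ((j : ℕ) + 1) • (Ψ j).comp (Polynomial.X + Polynomial.C ((j : ℝ) + 1))).degree ≤
      (∑ j : Fin m, (-1 : ℝ) ^ ((j : ℕ) + 1) • Ψ j).degree := by
  have hΨ : ∀ j : Fin m, j ∈ univ → ((-1 : ℝ) ^ ((j : ℕ) + 1) • Ψ j).natDegree ≤ dtil := fun j hj =>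
    (natDegree_smul_le _ _).trans (hdtil ▸ le_sup (f := fun j => (Ψ j).natDegree) hj)
  simpa only [smul_comp] using degree_sum_comp_X_add_C_le univ _ (fun j : Fin m => (j : ℝ) + 1) hΨ
    fun g hg => by simpa only [mul_smul_comm] using hG g hg

/-- Degree bound for `M(x) = Σ_j (−1)^j Ψ_j(x+j)`: if the polynomials
`G_g(x) = Σ_j (−1)^j (x−j+1)^g Ψ_j(x)` satisfy `deg G_g ≤ g + deg G_0` for all
`0 ≤ g ≤ d̃ − deg G_0` (where `d̃ = max_j deg Ψ_j`), then `deg M ≤ deg G_0`. -/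
theorem degree_M_le (m : ℕ) (hm : 1 ≤ m) (Ψ : Fin m → Polynomial ℝ)
    (hΨ : ∃ j, Ψ j ≠ 0)
    (dtil : ℕ) (hdtil : dtil = Finset.univ.sup fun j => (Ψ j).natDegree)
    (hG : ∀ g : ℕ,
      ((g : WithBot ℕ) +
          (∑ j : Fin m, (-1 : ℝ) ^ ((j : ℕ) + 1) • Ψ j).degree ≤ (dtil : WithBot ℕ)) →
      (∑ j : Fin m,
          (-1 : ℝ) ^ ((j : ℕ) + 1) • ((Polynomial.X - Polynomial.C ((j : ℝ) + 1) + 1) ^ g * Ψ j)).degree ≤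
        (g : WithBot ℕ) + (∑ j : Fin m, (-1 : ℝ) ^ ((j : ℕ) + 1) • Ψ j).degree) :
    (∑ j : Fin m, (-1 : ℝ) ^ ((j : ℕ) + 1) • (Ψ j).comp (Polynomial.X + Polynomial.C ((j : ℝ) + 1))).degree ≤
      (∑ j : Fin m, (-1 : ℝ) ^ ((j : ℕ) + 1) • Ψ j).degree :=
  degree_M_le_general m Ψ dtil hdtil hG
end

section
/- Let α, β, N be real numbers with α ∉ {−1,−2,−3,…}, and write λ(x) = x(x+α+β+1) and R_n = R_n^{α,β,N}. Then for every integer n ≥ 0 and every real x with (2x+α+β)(2x+α+β+1)(2x+α+β+2) ≠ 0: −((x+α+1)(x+α+β+1)/((2x+α+β+1)(2x+α+β+2))) · (R_n(λ(x+1)) − R_n(λ(x))) + (x(x+β)/((2x+α+β)(2x+α+β+1))) · (R_n(λ(x)) − R_n(λ(x−1))) = − Σ_{j=1}^n R_{n−j}(λ(x)). (This says that the sequence ε_n = −1 defines a D-operator D_1 for the dual Hahn polynomials, the displayed difference operator.) -/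
open Polynomial Finset

noncomputable section

/-- Pochhammer symbol `(a)_k = a(a+1)⋯(a+k−1)`. -/
def poch (a : ℝ) (k : ℕ) : ℝ := ∏ i ∈ Finset.range k, (a + i)

/-- The quadratic lattice `λ^{α,β}(x) = x(x+α+β+1)`. -/
def lam (α β x : ℝ) : ℝ := x * (x + α + β + 1)

/-- The dual Hahn polynomial `R_n^{α,β,N}`. -/
def dualHahn (α β N : ℝ) (n : ℕ) : Polynomial ℝ :=
  Polynomial.C ((n.factorial : ℝ))⁻¹ *
    ∑ j ∈ Finset.range (n + 1),
      Polynomial.C ((-1 : ℝ) ^ j * poch (-(n : ℝ)) j * poch (-N + j) (n - j)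
          / (poch (α + 1) j * (j.factorial : ℝ))) *
        ∏ i ∈ Finset.range j, (Polynomial.X - Polynomial.C ((i : ℝ) * (α + β + 1 + i)))

/-- Dual Hahn polynomial with integer index; `R_k = 0` for `k < 0`. -/
def dualHahnZ (α β N : ℝ) (k : ℤ) : Polynomial ℝ :=
  if 0 ≤ k then dualHahn α β N k.toNat else 0

/-- The Hahn polynomial `h_n^{α,β,N}` evaluated at `x`. -/
def hahn (α β N : ℝ) (n : ℕ) (x : ℝ) : ℝ :=
  ∑ j ∈ Finset.range (n + 1),
    poch (-(n : ℝ)) j * poch ((n : ℝ) + α + β + 1) j * poch (-N + j) (n - j) *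
      poch (α + j + 1) (n - j) * poch (-x) j / (j.factorial : ℝ)

/-- The dual Hahn weight `w_{*;α,β,N}(x)`. -/
def dualHahnWeight (α β : ℝ) (N : ℕ) (x : ℕ) : ℝ :=
  (2 * (x : ℝ) + α + β + 1) * poch (α + 1) x * poch (-(N : ℝ)) x * (N.factorial : ℝ) /
    ((-1 : ℝ) ^ x * poch ((x : ℝ) + α + β + 1) (N + 1) * poch (β + 1) x * (x.factorial : ℝ))

/-!
Write `e_j(λ) = ∏_{i<j} (λ - i(α+β+1+i)) / ((α+1)_j j!)`; then
`R_n = ∑_{j ≤ n} (-N+j)_{n-j} / (n-j)! · e_j`. On the lattice `λ(x) = x(x+α+β+1)` the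
product in `e_j` splits as a falling factorial in `x` times a rising factorial in `x+α+β+1`,
and the two contiguity relations this gives show that the difference operator kills `e_0`
and sends `e_{j+1}` to `-e_j`. Summing `R_k` over `k < n` and exchanging the sums, the
coefficient of `e_j` is `∑_{t < n-j} (a)_t / t!` with `a = -N+j`, which the hockey-stick identity
`∑_{t ≤ L} (a)_t / t! = (a+1)_L / L!` turns into the coefficient of `e_j` in `D R_n`.
-/

open scoped Nat

theorem poch_succ (a : ℝ) (k : ℕ) : poch a (k + 1) = poch a k * (a + k) :=
  prod_range_succ _ _

theorem poch_succ' (a : ℝ) (k : ℕ) : poch a (k + 1) = a * poch (a + 1) k := by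
  rw [poch, poch, prod_range_succ', mul_comm]
  push_cast
  rw [add_zero]
  exact congrArg _ (prod_congr rfl fun i _ => by ring)

theorem poch_eq_eval_ascPochhammer (a : ℝ) (k : ℕ) :
    poch a k = (ascPochhammer ℝ k).eval a := by
  induction k with
  | zero => simp [poch]
  | succ k ih => rw [poch_succ, ascPochhammer_succ_eval, ih]

theorem neg_one_pow_mul_poch_neg_natCast (n j : ℕ) :
    (-1) ^ j * poch (-(n : ℝ)) j = n.descFactorial j := by
  rw [poch_eq_eval_ascPochhammer, ascPochhammer_eval_neg_eq_descPochhammer,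
    descPochhammer_eval_eq_descFactorial, ← mul_assoc, ← pow_add, Even.neg_one_pow ⟨j, rfl⟩,
    one_mul]

theorem poch_ne_zero {a : ℝ} (ha : ∀ k : ℕ, a ≠ -1 - k) (j : ℕ) : poch (a + 1) j ≠ 0 :=
  prod_ne_zero_iff.2 fun i _ h => ha i (by linarith)

theorem sum_range_poch_div_factorial (a : ℝ) (L : ℕ) :
    ∑ t ∈ range (L + 1), poch a t / t ! = poch (a + 1) L / L ! := by
  induction L with
  | zero => simp [poch]
  | succ L ih =>
    rw [sum_range_succ, ih, poch_succ' a L, poch_succ (a + 1) L, Nat.factorial_succ]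
    push_cast
    field_simp
    ring

theorem sum_Icc_one_sub {M : Type*} [AddCommMonoid M] (f : ℕ → M) (n : ℕ) :
    ∑ j ∈ Icc 1 n, f (n - j) = ∑ k ∈ range n, f k := by
  refine sum_nbij' (n - ·) (n - ·) ?_ ?_ ?_ ?_ ?_ <;> intro j hj <;>
    simp at hj ⊢ <;> omega

def lamProd (α β : ℝ) (j : ℕ) (y : ℝ) : ℝ :=
  ∏ i ∈ range j, (lam α β y - i * (α + β + 1 + i))

theorem lamProd_eq_descPochhammer_mul_poch (α β : ℝ) (j : ℕ) (y : ℝ) :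
    lamProd α β j y = (descPochhammer ℝ j).eval y * poch (y + α + β + 1) j := by
  rw [lamProd, descPochhammer_eval_eq_prod_range, poch, ← prod_mul_distrib]
  exact prod_congr rfl fun i _ => by rw [lam]; ring

theorem lamProd_succ_add_one_sub (α β : ℝ) (j : ℕ) (y : ℝ) :
    lamProd α β (j + 1) (y + 1) - lamProd α β (j + 1) y =
      (j + 1) * (2 * y + α + β + 2) * lamProd (α + 1) β j y := by
  simp only [lamProd_eq_descPochhammer_mul_poch]
  rw [descPochhammer_succ_eval j y, descPochhammer_succ_left, poch_succ, poch_succ']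
  simp only [eval_mul, eval_X, eval_comp, eval_sub, eval_one, add_sub_cancel_right]
  ring_nf

theorem add_mul_lamProd_add_one (α β : ℝ) (j : ℕ) (y : ℝ) :
    (y + α + β + 1) * lamProd (α + 1) β j y = (y + α + β + 1 + j) * lamProd α β j y := by
  have h := (poch_succ' (y + α + β + 1) j).symm.trans (poch_succ _ j)
  simp only [lamProd_eq_descPochhammer_mul_poch]
  rw [show y + (α + 1) + β + 1 = y + α + β + 1 + 1 by ring]
  linear_combination (descPochhammer ℝ j).eval y * h

theorem mul_lamProd_add_one_sub_one (α β : ℝ) (j : ℕ) (y : ℝ) :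
    y * lamProd (α + 1) β j (y - 1) = (y - j) * lamProd α β j y := by
  have h : (descPochhammer ℝ (j + 1)).eval y = y * (descPochhammer ℝ j).eval (y - 1) := by
    rw [descPochhammer_succ_left]; simp only [eval_mul, eval_X, eval_comp, eval_sub, eval_one]
  rw [descPochhammer_succ_eval] at h
  simp only [lamProd_eq_descPochhammer_mul_poch]
  rw [show y - 1 + (α + 1) + β + 1 = y + α + β + 1 by ring]
  linear_combination -poch (y + α + β + 1) j * h

def dualHahnD (α β : ℝ) : (ℝ → ℝ) →ₗ[ℝ] (ℝ → ℝ) where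
  toFun f x :=
    -((x + α + 1) * (x + α + β + 1) / ((2 * x + α + β + 1) * (2 * x + α + β + 2))) *
        (f (x + 1) - f x) +
      (x * (x + β) / ((2 * x + α + β) * (2 * x + α + β + 1))) * (f x - f (x - 1))
  map_add' f g := by ext x; simp only [Pi.add_apply]; ring
  map_smul' c f := by ext x; simp only [Pi.smul_apply, smul_eq_mul, RingHom.id_apply]; ring

theorem dualHahnD_apply (α β : ℝ) (f : ℝ → ℝ) (x : ℝ) :
    dualHahnD α β f x =
      -((x + α + 1) * (x + α + β + 1) / ((2 * x + α + β + 1) * (2 * x + α + β + 2))) *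
          (f (x + 1) - f x) +
        (x * (x + β) / ((2 * x + α + β) * (2 * x + α + β + 1))) * (f x - f (x - 1)) :=
  rfl

theorem dualHahnD_const (α β c : ℝ) : dualHahnD α β (fun _ => c) = 0 := by
  ext x; simp [dualHahnD_apply]

theorem dualHahnD_lamProd_succ {α β x : ℝ}
    (hx : (2 * x + α + β) * (2 * x + α + β + 1) * (2 * x + α + β + 2) ≠ 0) (j : ℕ) :
    dualHahnD α β (lamProd α β (j + 1)) x = -((j + 1) * (α + j + 1)) * lamProd α β j x := by
  obtain ⟨⟨hd0, hd1⟩, hd2⟩ := mul_ne_zero_iff.1 hx |>.imp_left mul_ne_zero_iff.1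
  have hQ := lamProd_succ_add_one_sub α β j (x - 1)
  rw [sub_add_cancel, show 2 * (x - 1) + α + β + 2 = 2 * x + α + β by ring] at hQ
  rw [dualHahnD_apply, lamProd_succ_add_one_sub, hQ]
  -- so that `field_simp` recognises the denominators `d`, `d + 1`, `d + 2`
  generalize hd : 2 * x + α + β = d at *
  field_simp
  linear_combination -(x + α + 1) * add_mul_lamProd_add_one α β j x
    + (x + β) * mul_lamProd_add_one_sub_one α β j x - (α + j + 1) * lamProd α β j x * hd

def dualHahnBasis (α β : ℝ) (j : ℕ) : ℝ → ℝ :=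
  (poch (α + 1) j * j !)⁻¹ • lamProd α β j

theorem dualHahnBasis_zero (α β : ℝ) : dualHahnBasis α β 0 = fun _ => 1 := by
  ext y; simp [dualHahnBasis, lamProd, poch]

theorem dualHahnD_basis_succ {α β x : ℝ} (hα : ∀ k : ℕ, α ≠ -1 - k)
    (hx : (2 * x + α + β) * (2 * x + α + β + 1) * (2 * x + α + β + 2) ≠ 0) (j : ℕ) :
    dualHahnD α β (dualHahnBasis α β (j + 1)) x = -dualHahnBasis α β j x := by
  have hαj : α + 1 + j ≠ 0 := fun h => hα j (by linarith)
  have hpoch := poch_ne_zero hα j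
  rw [dualHahnBasis, map_smul, Pi.smul_apply, dualHahnD_lamProd_succ hx, dualHahnBasis,
    Pi.smul_apply, smul_eq_mul, smul_eq_mul, poch_succ, Nat.factorial_succ]
  push_cast
  field_simp
  ring

theorem dualHahn_eval_lam (α β N : ℝ) (n : ℕ) :
    (fun y => (dualHahn α β N n).eval (lam α β y)) =
      ∑ j ∈ range (n + 1), (poch (-N + j) (n - j) / (n - j)!) • dualHahnBasis α β j := by
  ext y
  simp only [dualHahn, eval_mul, eval_C, eval_finsetSum, eval_prod, eval_sub, eval_X, mul_sum,
    Finset.sum_apply, Pi.smul_apply, smul_eq_mul, dualHahnBasis, lamProd]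
  refine sum_congr rfl fun j hj => ?_
  have hfac := Nat.factorial_mul_descFactorial (Nat.lt_succ_iff.1 (mem_range.1 hj))
  rw [← Nat.cast_inj (R := ℝ), Nat.cast_mul, ← neg_one_pow_mul_poch_neg_natCast] at hfac
  have hcoeff : (n ! : ℝ)⁻¹ * ((-1) ^ j * poch (-n) j) = ((n - j)! : ℝ)⁻¹ := by
    have hne : (-1) ^ j * poch (-(n : ℝ)) j ≠ 0 :=
      right_ne_zero_of_mul (hfac ▸ Nat.cast_ne_zero.2 n.factorial_ne_zero)
    rw [← hfac, mul_inv, inv_mul_cancel_right₀ hne]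
  linear_combination (poch (-N + j) (n - j) / (poch (α + 1) j * j !) *
    ∏ i ∈ range j, (lam α β y - i * (α + β + 1 + i))) * hcoeff

theorem sum_range_dualHahn_eval_lam (α β N : ℝ) (n : ℕ) (x : ℝ) :
    ∑ k ∈ range n, (dualHahn α β N k).eval (lam α β x) =
      ∑ j ∈ range n,
        poch (-N + (j + 1 : ℕ)) (n - (j + 1)) / (n - (j + 1))! * dualHahnBasis α β j x := by
  have hR (k : ℕ) : (dualHahn α β N k).eval (lam α β x) =
      ∑ j ∈ Ico 0 (k + 1), poch (-N + j) (k - j) / (k - j)! * dualHahnBasis α β j x := by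
    rw [← range_eq_Ico]
    simpa using congrFun (dualHahn_eval_lam α β N k) x
  simp_rw [hR, range_eq_Ico, ← sum_Ico_Ico_comm, ← sum_mul]
  refine sum_congr rfl fun j hj => ?_
  obtain ⟨L, hL⟩ : ∃ L, n - j = L + 1 := ⟨n - (j + 1), by rw [mem_Ico] at hj; omega⟩
  rw [sum_Ico_eq_sum_range, hL, show n - (j + 1) = L by omega]
  simp only [add_tsub_cancel_left]
  rw [sum_range_poch_div_factorial]
  push_cast
  ring_nf

/-- The sequence `ε_n = −1` defines a `𝒟`-operator for the dual Hahn polynomials: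
the displayed first-order difference operator acts as the lowering operator
`R_n ↦ −Σ_{j=1}^n R_{n−j}`. -/
theorem dualHahn_Doperator_one (α β N : ℝ) (hα : ∀ k : ℕ, α ≠ -1 - k)
    (n : ℕ) (x : ℝ)
    (hx : (2 * x + α + β) * (2 * x + α + β + 1) * (2 * x + α + β + 2) ≠ 0) :
    -((x + α + 1) * (x + α + β + 1) / ((2 * x + α + β + 1) * (2 * x + α + β + 2))) *
        ((dualHahn α β N n).eval (lam α β (x + 1)) - (dualHahn α β N n).eval (lam α β x)) +
      (x * (x + β) / ((2 * x + α + β) * (2 * x + α + β + 1))) *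
        ((dualHahn α β N n).eval (lam α β x) - (dualHahn α β N n).eval (lam α β (x - 1))) =
    -∑ j ∈ Finset.Icc 1 n, (dualHahn α β N (n - j)).eval (lam α β x) := by
  change dualHahnD α β (fun y => (dualHahn α β N n).eval (lam α β y)) x = _
  rw [sum_Icc_one_sub (fun k => (dualHahn α β N k).eval (lam α β x)),
    sum_range_dualHahn_eval_lam, dualHahn_eval_lam, map_sum, sum_range_succ', Pi.add_apply,
    Finset.sum_apply, ← sum_neg_distrib]
  simp only [map_smul, Pi.smul_apply, smul_eq_mul,
    dualHahnD_basis_succ hα hx, dualHahnBasis_zero, dualHahnD_const, Pi.zero_apply, mul_zero,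
    add_zero, mul_neg]

end
end

section
/- Let N ≥ 4 be an integer and let α, β be real numbers such that α, β ∉ {−1,−2,…,−N} and α+β ∉ {−1,−2,…,−2N−1} (so that both dual Hahn weights below are defined). Write λ(x) = x(x+α+β+1). Then for every integer x with 2 ≤ x ≤ N−2: λ(x) · (λ(x)−λ(N)) · (λ(x)−λ(−1−α)) · (λ(x)−λ(1)) · (λ(x)−λ(N−1)) · (λ(x)−λ(1−β)) · w_{*;α,β,N}(x) = (α+1)_4 · ((N−3)_4)^2 · w_{*;α+4,β,N−4}(x−2). (This identifies the Christoffel transform of the dual Hahn weight by (λ−λ(1))(λ−λ(N−1))(λ−λ(1−β)) as a Geronimus transform of a shifted dual Hahn weight with parameters α+4, β, N−4.) -/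
open Polynomial Finset

noncomputable section

lemma poch_add (a : ℝ) (m n : ℕ) : poch a (m + n) = poch a m * poch (a + m) n := by
  unfold poch
  rw [Finset.prod_range_add]
  congr 1
  refine Finset.prod_congr rfl fun i _ => ?_
  push_cast; ring

lemma poch_congr {a b : ℝ} (n : ℕ) (h : a = b) : poch a n = poch b n := by rw [h]

lemma poch_two (a : ℝ) : poch a 2 = a * (a + 1) := by
  simp [poch, Finset.prod_range_succ]

lemma poch_four (a : ℝ) : poch a 4 = a * (a + 1) * (a + 2) * (a + 3) := by
  simp [poch, Finset.prod_range_succ]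

lemma poch_ne_zero_s15 {a : ℝ} {k : ℕ} (h : ∀ i < k, a + i ≠ 0) : poch a k ≠ 0 :=
  Finset.prod_ne_zero_iff.mpr fun i hi => h i (Finset.mem_range.mp hi)


set_option maxHeartbeats 1000000 in
/-- The Christoffel transform of the dual Hahn weight by
`(λ−λ(1))(λ−λ(N−1))(λ−λ(1−β))` is a Geronimus transform of the shifted dual Hahn weight
with parameters `α+4, β, N−4`. -/
theorem dualHahn_weight_christoffel_geronimus (N : ℕ) (hN : 4 ≤ N) (α β : ℝ)
    (hα : ∀ k : ℕ, k < N → α ≠ -1 - k)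
    (hβ : ∀ k : ℕ, k < N → β ≠ -1 - k)
    (hαβ : ∀ k : ℕ, k < 2 * N + 1 → α + β ≠ -1 - k)
    (x : ℕ) (hx2 : 2 ≤ x) (hxN : x ≤ N - 2) :
    lam α β x * (lam α β x - lam α β N) * (lam α β x - lam α β (-1 - α)) *
        (lam α β x - lam α β 1) * (lam α β x - lam α β ((N : ℝ) - 1)) *
        (lam α β x - lam α β (1 - β)) * dualHahnWeight α β N x =
    poch (α + 1) 4 * (poch ((N : ℝ) - 3) 4) ^ 2 * dualHahnWeight (α + 4) β (N - 4) (x - 2) := by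
  obtain ⟨M, rfl⟩ : ∃ M, N = M + 4 := ⟨N - 4, by omega⟩
  obtain ⟨y, rfl⟩ : ∃ y, x = y + 2 := ⟨x - 2, by omega⟩
  have hyM : y ≤ M := by omega
  -- basic nonvanishing facts
  have hα' : ∀ k : ℕ, k < M + 4 → α + 1 + (k : ℝ) ≠ 0 := by
    intro k hk h; exact hα k hk (by linarith)
  have hβ' : ∀ k : ℕ, k < M + 4 → β + 1 + (k : ℝ) ≠ 0 := by
    intro k hk h; exact hβ k hk (by linarith)
  have hs' : ∀ k : ℕ, k < 2 * (M + 4) + 1 → α + β + 1 + (k : ℝ) ≠ 0 := by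
    intro k hk h; exact hαβ k hk (by linarith)
  have n1 : (α + (y : ℝ) + 3) ≠ 0 := fun h => hα' (y + 2) (by omega) (by push_cast; linarith)
  have n2 : (α + (y : ℝ) + 4) ≠ 0 := fun h => hα' (y + 3) (by omega) (by push_cast; linarith)
  have hyMr : (y : ℝ) ≤ (M : ℝ) := Nat.cast_le.mpr hyM
  have n3 : ((y : ℝ) - (M : ℝ) - 2) ≠ 0 := by intro h; linarith
  have n4 : ((y : ℝ) - (M : ℝ) - 1) ≠ 0 := by intro h; linarith
  have n5 : ((y : ℝ) + α + β + 3) ≠ 0 := fun h => hs' (y + 2) (by omega) (by push_cast; linarith)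
  have n6 : ((y : ℝ) + α + β + 4) ≠ 0 := fun h => hs' (y + 3) (by omega) (by push_cast; linarith)
  have n7 : poch ((y : ℝ) + α + β + 5) (M + 1) ≠ 0 := by
    refine poch_ne_zero_s15 fun i hi h => hs' (y + 4 + i) (by omega) ?_
    push_cast; push_cast at h; linarith
  have n8 : ((y : ℝ) + α + β + (M : ℝ) + 6) ≠ 0 :=
    fun h => hs' (y + M + 5) (by omega) (by push_cast; linarith)
  have n9 : ((y : ℝ) + α + β + (M : ℝ) + 7) ≠ 0 :=
    fun h => hs' (y + M + 6) (by omega) (by push_cast; linarith)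
  have n10 : poch (β + 1) y ≠ 0 := by
    refine poch_ne_zero_s15 fun i hi h => hβ' i (by omega) h
  have n11 : (β + 1 + (y : ℝ)) ≠ 0 := fun h => hβ' y (by omega) (by push_cast; linarith)
  have n12 : (β + 2 + (y : ℝ)) ≠ 0 := fun h => hβ' (y + 1) (by omega) (by push_cast; linarith)
  have n13 : ((y.factorial : ℝ)) ≠ 0 := Nat.cast_ne_zero.mpr y.factorial_ne_zero
  have n14 : ((-1 : ℝ)) ^ y ≠ 0 := pow_ne_zero _ (by norm_num)
  have n15 : ((y : ℝ) + 1) ≠ 0 := by positivity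
  have n16 : ((y : ℝ) + 2) ≠ 0 := by positivity
  -- splitting identities
  have e1 : poch (α + 1) (y + 2) * ((α + (y : ℝ) + 3) * (α + (y : ℝ) + 4))
      = poch (α + 1) 4 * poch (α + 5) y := by
    have h1 := poch_add (α + 1) 4 y
    have h2 := poch_add (α + 1) (y + 2) 2
    rw [poch_two] at h2
    rw [poch_congr y (show α + 1 + ((4 : ℕ) : ℝ) = α + 5 by push_cast; ring)] at h1
    rw [show y + 2 + 2 = 4 + y by omega] at h2
    push_cast at h2
    linear_combination h1 - h2
  have e2 : poch (-((M : ℝ) + 4)) (y + 2) * (((y : ℝ) - M - 2) * ((y : ℝ) - M - 1))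
      = (((M : ℝ) + 1) * ((M : ℝ) + 2) * ((M : ℝ) + 3) * ((M : ℝ) + 4)) * poch (-(M : ℝ)) y := by
    have h1 := poch_add (-((M : ℝ) + 4)) 4 y
    have h2 := poch_add (-((M : ℝ) + 4)) (y + 2) 2
    rw [poch_two] at h2
    rw [poch_four] at h1
    rw [poch_congr y (show -((M : ℝ) + 4) + ((4 : ℕ) : ℝ) = -(M : ℝ) by push_cast; ring)] at h1
    rw [show y + 2 + 2 = 4 + y by omega] at h2
    push_cast at h2
    linear_combination h1 - h2
  have hQ1 : poch (α + 1) (y + 2)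
      = poch (α + 1) 4 * poch (α + 5) y / ((α + (y : ℝ) + 3) * (α + (y : ℝ) + 4)) := by
    rw [eq_div_iff (mul_ne_zero n1 n2)]; linear_combination e1
  have hQ2 : poch (-((M : ℝ) + 4)) (y + 2)
      = (((M : ℝ) + 1) * ((M : ℝ) + 2) * ((M : ℝ) + 3) * ((M : ℝ) + 4)) * poch (-(M : ℝ)) y /
        (((y : ℝ) - M - 2) * ((y : ℝ) - M - 1)) := by
    rw [eq_div_iff (mul_ne_zero n3 n4)]; linear_combination e2
  have e3 : poch ((y : ℝ) + 2 + α + β + 1) (M + 4 + 1)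
      = (((y : ℝ) + α + β + 3) * ((y : ℝ) + α + β + 4)) *
        (poch ((y : ℝ) + α + β + 5) (M + 1) *
          (((y : ℝ) + α + β + (M : ℝ) + 6) * ((y : ℝ) + α + β + (M : ℝ) + 7))) := by
    rw [show M + 4 + 1 = 2 + (M + 1 + 2) by omega, poch_add, poch_add,
      poch_congr (M + 1) (show (y : ℝ) + 2 + α + β + 1 + ((2 : ℕ) : ℝ) = (y : ℝ) + α + β + 5 by
        push_cast; ring), poch_two, poch_two]
    push_cast; ring
  have e4 : poch (β + 1) (y + 2) = poch (β + 1) y * ((β + 1 + (y : ℝ)) * (β + 2 + (y : ℝ))) := by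
    rw [poch_add, poch_two]; push_cast; ring
  have e5 : (((y + 2).factorial : ℕ) : ℝ) = (y.factorial : ℝ) * (((y : ℝ) + 1) * ((y : ℝ) + 2)) := by
    rw [show y + 2 = y + 1 + 1 from rfl, Nat.factorial_succ, Nat.factorial_succ]
    push_cast; ring
  have e6 : (((M + 4).factorial : ℕ) : ℝ)
      = (M.factorial : ℝ) * (((M : ℝ) + 1) * ((M : ℝ) + 2) * ((M : ℝ) + 3) * ((M : ℝ) + 4)) := by
    rw [show M + 4 = M + 1 + 1 + 1 + 1 from rfl, Nat.factorial_succ, Nat.factorial_succ,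
      Nat.factorial_succ, Nat.factorial_succ]
    push_cast; ring
  have e7 : ((-1 : ℝ)) ^ (y + 2) = (-1 : ℝ) ^ y := by rw [pow_add]; norm_num
  have e8 : poch ((M : ℝ) + 4 - 3) 4
      = ((M : ℝ) + 1) * ((M : ℝ) + 2) * ((M : ℝ) + 3) * ((M : ℝ) + 4) := by
    rw [poch_four]; ring
  simp only [dualHahnWeight, lam, Nat.add_sub_cancel]
  push_cast
  rw [hQ1, hQ2, e3, e4, e5, e6, e7,
    poch_congr y (show α + 4 + 1 = α + 5 by ring),
    poch_congr (M + 1) (show (y : ℝ) + (α + 4) + β + 1 = (y : ℝ) + α + β + 5 by ring),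
    e8,
    show 2 * ((y : ℝ) + 2) + α + β + 1 = 2 * (y : ℝ) + α + β + 5 by ring,
    show 2 * (y : ℝ) + (α + 4) + β + 1 = 2 * (y : ℝ) + α + β + 5 by ring]
  set a1 : ℝ := α + (y : ℝ) + 3 with ha1
  set a2 : ℝ := α + (y : ℝ) + 4 with ha2
  set a3 : ℝ := (y : ℝ) - (M : ℝ) - 2 with ha3
  set a4 : ℝ := (y : ℝ) - (M : ℝ) - 1 with ha4
  set a7 : ℝ := (y : ℝ) + α + β + (M : ℝ) + 6 with ha7
  set a8 : ℝ := (y : ℝ) + α + β + (M : ℝ) + 7 with ha8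
  set a5 : ℝ := (y : ℝ) + α + β + 3 with ha5
  set a6 : ℝ := (y : ℝ) + α + β + 4 with ha6
  set a9 : ℝ := β + 1 + (y : ℝ) with ha9
  set a10 : ℝ := β + 2 + (y : ℝ) with ha10
  set a11 : ℝ := (y : ℝ) + 1 with ha11
  set a12 : ℝ := (y : ℝ) + 2 with ha12
  have h0 : a12 + α + β + 1 = a5 := by rw [ha12, ha5]; ring
  rw [h0]
  have d1 : a12 * a5 - ((M : ℝ) + 4) * ((M : ℝ) + 4 + α + β + 1) = a3 * a8 := by
    rw [ha12, ha5, ha3, ha8]; ring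
  have d2 : a12 * a5 - (-1 - α) * (-1 - α + α + β + 1) = a1 * a10 := by
    rw [ha12, ha5, ha1, ha10]; ring
  have d3 : a12 * a5 - 1 * (1 + α + β + 1) = a11 * a6 := by
    rw [ha12, ha5, ha11, ha6]; ring
  have d4 : a12 * a5 - ((M : ℝ) + 4 - 1) * ((M : ℝ) + 4 - 1 + α + β + 1) = a4 * a7 := by
    rw [ha12, ha5, ha4, ha7]; ring
  have d5 : a12 * a5 - (1 - β) * (1 - β + α + β + 1) = a9 * a2 := by
    rw [ha12, ha5, ha9, ha2]; ring
  rw [d1, d2, d3, d4, d5]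
  clear_value a1 a2 a3 a4 a5 a6 a7 a8 a9 a10 a11 a12
  field_simp

end
end

section
/- Let N be a positive integer and α, β real numbers with α ∉ {−1,−2,−3,…}. Then for every integer n ≥ N+1, the polynomial ∏_{i=0}^{N} (λ − i(α+β+1+i)) divides R_n^{α,β,N}(λ) in ℝ[λ]; in particular, R_n^{α,β,N}(λ^{α,β}(i)) = 0 for every integer 0 ≤ i ≤ N, where λ^{α,β}(x) = x(x+α+β+1). -/
open Polynomial Finset

noncomputable section

/- For `j ≤ N` the coefficient of the `j`-th term of `R_n` contains the factor
`(-N + j)_{n-j} = (-(N - j))_{n-j}`, which vanishes since `N - j < n - j`; for `j > N` the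
basis polynomial `∏_{i<j} (λ - i(α+β+1+i))` already contains all the factors `i ≤ N`. -/

lemma poch_neg_natCast_eq_zero {k m : ℕ} (h : k < m) : poch (-(k : ℝ)) m = 0 :=
  prod_eq_zero (mem_range.2 h) (by ring)

lemma prod_range_dvd_dualHahn (α β : ℝ) {N n : ℕ} (hn : N < n) :
    (∏ i ∈ range (N + 1), (X - C ((i : ℝ) * (α + β + 1 + i)))) ∣ dualHahn α β N n := by
  refine dvd_mul_of_dvd_right (dvd_sum fun j _ => ?_) _
  rcases le_or_gt j N with hjN | hNj
  · have hpoch : poch (-(N : ℝ) + j) (n - j) = 0 := by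
      have hcast : -(N : ℝ) + j = -((N - j : ℕ) : ℝ) := by push_cast [Nat.cast_sub hjN]; ring
      rw [hcast]
      exact poch_neg_natCast_eq_zero (by omega)
    simp [hpoch]
  · exact dvd_mul_of_dvd_right (prod_dvd_prod_of_subset _ _ _ (range_subset_range.2 hNj)) _

lemma eval_lam_prod_range_eq_zero (α β : ℝ) {k m : ℕ} (hk : k < m) :
    (∏ i ∈ range m, (X - C ((i : ℝ) * (α + β + 1 + i)))).eval (lam α β k) = 0 := by
  rw [eval_prod]
  exact prod_eq_zero (mem_range.2 hk) (by rw [eval_sub, eval_X, eval_C, lam]; ring)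

theorem dualHahn_divisibility_general (N : ℕ) (α β : ℝ)
    (n : ℕ) (hn : N + 1 ≤ n) :
    (∏ i ∈ Finset.range (N + 1), (Polynomial.X - Polynomial.C ((i : ℝ) * (α + β + 1 + i)))) ∣
        dualHahn α β N n ∧
      ∀ i : ℕ, i ≤ N → (dualHahn α β N n).eval (lam α β i) = 0 := by
  have hdvd := prod_range_dvd_dualHahn α β hn
  exact ⟨hdvd, fun i hi =>
    eval_eq_zero_of_dvd_of_eval_eq_zero hdvd (eval_lam_prod_range_eq_zero α β (by omega))⟩

/-- For `N` a positive integer and `n ≥ N+1`, the dual Hahn polynomial `R_n^{α,β,N}` is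
divisible by `∏_{i=0}^{N}(λ − i(α+β+1+i))`; in particular it vanishes at the points
`λ^{α,β}(i)`, `0 ≤ i ≤ N`, of the quadratic lattice. -/
theorem dualHahn_divisibility (N : ℕ) (hN : 0 < N) (α β : ℝ) (hα : ∀ k : ℕ, α ≠ -1 - k)
    (n : ℕ) (hn : N + 1 ≤ n) :
    (∏ i ∈ Finset.range (N + 1), (Polynomial.X - Polynomial.C ((i : ℝ) * (α + β + 1 + i)))) ∣
        dualHahn α β N n ∧
      ∀ i : ℕ, i ≤ N → (dualHahn α β N n).eval (lam α β i) = 0 :=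
  dualHahn_divisibility_general N α β n hn

end
end
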